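/- For a tree T, the following are equivalent: (i) every ultrametric space generated by a non-degenerate vertex labeling of T belongs to US; (ii) every path contained in T has at most 3 edges; (iii) T has at most two distinct vertices of degree at least 2. -/

import Mathlib

open SimpleGraph

open scoped Classical in
/-- The distance induced by a vertex labeling `l` on a tree `G`: `0` on the
diagonal, and otherwise the maximum of `l` over the vertices of the unique
path joining the two points. -/
noncomputable def treeDist {V : Type*} {G : SimpleGraph V} (hG : G.IsTree)
    (l : V → NNReal) (u v : V) : NNReal :=
  if u = v then 0
  else (((hG.existsUnique_path u v).choose.support).map l).foldr max 0

/-- A labeling is non-degenerate if `max (l u) (l v) > 0` for every edge `{u, v}`. -/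
def Nondeg {V : Type*} (G : SimpleGraph V) (l : V → NNReal) : Prop :=
  ∀ u v, G.Adj u v → 0 < max (l u) (l v)

/-- The vertex `u` has degree at least two: it has two distinct neighbors. -/
def DegGe2 {V : Type*} (G : SimpleGraph V) (u : V) : Prop :=
  ∃ a b : V, a ≠ b ∧ G.Adj u a ∧ G.Adj u b

section Aux

variable {V : Type*} {G : SimpleGraph V}

lemma le_foldr_max {l : V → NNReal} {s : List V} {a : V} (h : a ∈ s) :
    l a ≤ (s.map l).foldr max 0 := by
  induction s with
  | nil => simp at h
  | cons b t ih =>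
    rcases List.mem_cons.mp h with rfl | h
    · exact le_max_left _ _
    · exact le_trans (ih h) (le_max_right _ _)

lemma treeDist_eq (hG : G.IsTree) (l : V → NNReal) {u v : V} (h : u ≠ v)
    {p : G.Walk u v} (hp : p.IsPath) :
    treeDist hG l u v = (p.support.map l).foldr max 0 := by
  obtain ⟨-, h2⟩ := (hG.existsUnique_path u v).choose_spec
  rw [treeDist, if_neg h, ← h2 p hp]

lemma start_le_treeDist (hG : G.IsTree) (l : V → NNReal) {u v : V} (h : u ≠ v) :
    l u ≤ treeDist hG l u v := by
  obtain ⟨hp, -⟩ := (hG.existsUnique_path u v).choose_spec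
  rw [treeDist_eq hG l h hp]
  exact le_foldr_max (Walk.start_mem_support _)

lemma end_le_treeDist (hG : G.IsTree) (l : V → NNReal) {u v : V} (h : u ≠ v) :
    l v ≤ treeDist hG l u v := by
  obtain ⟨hp, -⟩ := (hG.existsUnique_path u v).choose_spec
  rw [treeDist_eq hG l h hp]
  exact le_foldr_max (Walk.end_mem_support _)

lemma leaf_le_treeDist (hG : G.IsTree) (l : V → NNReal) {x y c : V}
    (hleaf : ∀ z, G.Adj x z → z = c) (hyx : y ≠ x) :
    l c ≤ treeDist hG l y x := by
  obtain ⟨hp, -⟩ := (hG.existsUnique_path y x).choose_spec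
  rw [treeDist_eq hG l hyx hp]
  set p := (hG.existsUnique_path y x).choose with hpdef
  obtain ⟨z, hadj, q, hq⟩ := Walk.exists_eq_cons_of_ne (Ne.symm hyx) p.reverse
  have hz : z = c := hleaf z hadj
  have : c ∈ p.reverse.support := by
    rw [hq, Walk.support_cons, hz.symm]
    exact List.mem_cons_of_mem _ q.start_mem_support
  rw [Walk.support_reverse, List.mem_reverse] at this
  exact le_foldr_max this

lemma mid_facts {a m m2 x : V} {h : G.Adj a m} {h' : G.Adj m m2} {q' : G.Walk m2 x}
    (hp : (Walk.cons h (Walk.cons h' q')).IsPath) :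
    DegGe2 G m ∧ m ≠ a ∧ m ≠ x := by
  simp only [Walk.isPath_def, Walk.support_cons, List.nodup_cons] at hp
  obtain ⟨ha, hm, -⟩ := hp
  have ham2 : a ≠ m2 := fun e => ha (by rw [e]; exact List.mem_cons_of_mem _ q'.start_mem_support)
  exact ⟨⟨a, m2, ham2, h.symm, h'⟩, h.ne',
    fun e => hm (by rw [e] at hm ⊢; exact q'.end_mem_support)⟩

lemma structure_lemma (hG : G.IsTree)
    (h3 : ¬ ∃ u v w : V, u ≠ v ∧ v ≠ w ∧ u ≠ w ∧
        DegGe2 G u ∧ DegGe2 G v ∧ DegGe2 G w) :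
    ∃ a b : V, (a = b ∨ G.Adj a b) ∧ ∀ x, x ≠ a → x ≠ b →
      ((G.Adj a x ∧ ∀ z, G.Adj x z → z = a) ∨ (G.Adj b x ∧ ∀ z, G.Adj x z → z = b)) := by
  by_cases hd : ∃ a b : V, a ≠ b ∧ DegGe2 G a ∧ DegGe2 G b
  · obtain ⟨a, b, hab, da, db⟩ := hd
    have huniq : ∀ m, DegGe2 G m → m = a ∨ m = b := by
      intro m dm
      by_contra hmem
      push_neg at hmem
      exact h3 ⟨m, a, b, hmem.1, hab, hmem.2, dm, da, db⟩
    refine ⟨a, b, Or.inr ?_, ?_⟩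
    · -- a and b are adjacent
      obtain ⟨hp, -⟩ := (hG.existsUnique_path a b).choose_spec
      set p := (hG.existsUnique_path a b).choose with hpdef
      clear_value p
      cases p with
      | nil => exact absurd rfl hab
      | cons h q =>
        cases q with
        | nil => exact h
        | cons h' q' =>
          exfalso
          obtain ⟨dm, hma, hmb⟩ := mid_facts hp
          rcases huniq _ dm with e | e
          · exact hma e
          · exact hmb e
    · intro x hxa hxb
      obtain ⟨hp, -⟩ := (hG.existsUnique_path a x).choose_spec
      set p := (hG.existsUnique_path a x).choose with hpdef
      clear_value p
      cases p with
      | nil => exact absurd rfl (Ne.symm hxa)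
      | cons h q =>
        cases q with
        | nil =>
          refine Or.inl ⟨h, fun z hz => ?_⟩
          by_contra hza
          have : DegGe2 G x := ⟨z, a, hza, hz, h.symm⟩
          rcases huniq _ this with e | e
          · exact hxa e
          · exact hxb e
        | cons h' q' =>
          obtain ⟨dm, hma, hmx⟩ := mid_facts hp
          rcases huniq _ dm with e | e
          · exact absurd e hma
          · subst e
            -- now h : Adj a m where m = b; h' : Adj b m2
            cases q' with
            | nil =>
              refine Or.inr ⟨h', fun z hz => ?_⟩
              by_contra hzb
              have : DegGe2 G x := ⟨z, _, hzb, hz, h'.symm⟩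
              rcases huniq _ this with e | e
              · exact hxa e
              · exact hxb e
            | cons h'' q'' =>
              exfalso
              obtain ⟨dm2, hm2b, hm2x⟩ := mid_facts hp.of_cons
              have hmemA := ((Walk.cons_isPath_iff _ _).mp hp).2
              rename_i m2 m3
              have hm2a : m2 ≠ a := by
                intro e; subst e
                exact hmemA (List.mem_cons_of_mem _ (Walk.start_mem_support _))
              rcases huniq _ dm2 with e | e
              · exact hm2a e
              · exact hm2b e
  · -- at most one vertex of degree ≥ 2
    push_neg at hd
    have hne : Nonempty V := hG.isConnected.nonempty
    obtain ⟨a, ha⟩ : ∃ a : V, ∀ m, DegGe2 G m → m = a := by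
      by_cases hex : ∃ a, DegGe2 G a
      · obtain ⟨a, da⟩ := hex
        exact ⟨a, fun m dm => by by_contra hne'; exact hd m a hne' dm da⟩
      · push_neg at hex
        exact ⟨Classical.arbitrary V, fun m dm => absurd dm (hex m)⟩
    refine ⟨a, a, Or.inl rfl, fun x hxa _ => ?_⟩
    obtain ⟨hp, -⟩ := (hG.existsUnique_path a x).choose_spec
    set p := (hG.existsUnique_path a x).choose with hpdef
    clear_value p
    cases p with
    | nil => exact absurd rfl (Ne.symm hxa)
    | cons h q =>
      cases q with
      | nil =>
        refine Or.inl ⟨h, fun z hz => ?_⟩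
        by_contra hza
        exact hxa (ha x ⟨z, a, hza, hz, h.symm⟩)
      | cons h' q' =>
        exfalso
        obtain ⟨dm, hma, -⟩ := mid_facts hp
        exact hma (ha _ dm)

lemma eq_cons_of_adj_mem (hG : G.IsTree) {x y a : V} {p : G.Walk x y} (hp : p.IsPath)
    (h : G.Adj x a) (ha : a ∈ p.support) : ∃ q : G.Walk a y, p = Walk.cons h q := by
  classical
  have hta : (p.takeUntil a ha).IsPath := hp.takeUntil ha
  have hsingle : (Walk.cons h Walk.nil : G.Walk x a).IsPath := by
    simp [Walk.isPath_def, h.ne]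
  have he := (hG.existsUnique_path x a).unique hta hsingle
  refine ⟨p.dropUntil a ha, ?_⟩
  conv_lhs => rw [← p.take_spec ha]
  rw [he, Walk.cons_append, Walk.nil_append]

lemma exists_cons_isPath (hG : G.IsTree) {x y : V} {p : G.Walk x y} (hp : p.IsPath)
    (hd : DegGe2 G x) : ∃ a, ∃ h : G.Adj a x, (Walk.cons h p).IsPath := by
  obtain ⟨a1, a2, hne, h1, h2⟩ := hd
  by_cases m1 : a1 ∈ p.support
  · by_cases m2 : a2 ∈ p.support
    · exfalso
      obtain ⟨q1, e1⟩ := eq_cons_of_adj_mem hG hp h1 m1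
      obtain ⟨q2, e2⟩ := eq_cons_of_adj_mem hG hp h2 m2
      have hs : x :: a1 :: q1.support.tail = x :: a2 :: q2.support.tail := by
        rw [← Walk.support_eq_cons q1, ← Walk.support_eq_cons q2,
          ← Walk.support_cons, ← Walk.support_cons, ← e1, ← e2]
        exacts [h2, h1]
      injection hs with _ hs2
      injection hs2 with hs3 _
      exact hne hs3
    · exact ⟨a2, h2.symm, hp.cons m2⟩
  · exact ⟨a1, h1.symm, hp.cons m1⟩

lemma no_three (hG : G.IsTree) (h2 : ∀ (u v : V) (p : G.Walk u v), p.IsPath → p.length ≤ 3) :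
    ¬ ∃ u v w : V, u ≠ v ∧ v ≠ w ∧ u ≠ w ∧
        DegGe2 G u ∧ DegGe2 G v ∧ DegGe2 G w := by
  rintro ⟨u, v, w, huv, hvw, huw, du, dv, dw⟩
  have key : ∀ x y : V, x ≠ y → DegGe2 G x → DegGe2 G y → G.Adj x y := by
    intro x y hxy dx dy
    by_contra hadj
    obtain ⟨hp, -⟩ := (hG.existsUnique_path x y).choose_spec
    set p := (hG.existsUnique_path x y).choose with hpdef
    have hl0 : p.length ≠ 0 := fun h => hxy (Walk.eq_of_length_eq_zero h)
    have hl1 : p.length ≠ 1 := fun h => hadj (Walk.adj_of_length_eq_one h)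
    obtain ⟨a, ha, hpa⟩ := exists_cons_isPath hG hp dx
    obtain ⟨b, hb, hpb⟩ := exists_cons_isPath hG hpa.reverse dy
    have h3 := h2 _ _ _ hpb
    simp only [Walk.length_cons, Walk.length_reverse] at h3
    omega
  have auv := key u v huv du dv
  have avw := key v w hvw dv dw
  have auw := key u w huw du dw
  have hpath1 : (Walk.cons auv (Walk.cons avw Walk.nil)).IsPath := by
    simp [Walk.isPath_def, huv, hvw, huw]
  have hpath2 : (Walk.cons auw Walk.nil).IsPath := by
    simp [Walk.isPath_def, huw]
  have := congrArg Walk.length ((hG.existsUnique_path u w).unique hpath1 hpath2)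
  simp at this

lemma le_three (hG : G.IsTree)
    (h3 : ¬ ∃ u v w : V, u ≠ v ∧ v ≠ w ∧ u ≠ w ∧
        DegGe2 G u ∧ DegGe2 G v ∧ DegGe2 G w) :
    ∀ (u v : V) (p : G.Walk u v), p.IsPath → p.length ≤ 3 := by
  intro u v p hp
  by_contra hlen
  push_neg at hlen
  apply h3
  cases p with
  | nil => simp at hlen
  | cons h1 q1 =>
    cases q1 with
    | nil => simp at hlen
    | cons h2 q2 =>
      cases q2 with
      | nil => simp at hlen
      | cons h3 q3 =>
        cases q3 with
        | nil => simp at hlen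
        | cons h4 q4 =>
          -- vertices: u, b, c, d, e
          rename_i b c d e
          simp only [Walk.isPath_def, Walk.support_cons] at hp
          obtain ⟨hu, hp⟩ := List.nodup_cons.mp hp
          obtain ⟨hb, hp⟩ := List.nodup_cons.mp hp
          obtain ⟨hc, hp⟩ := List.nodup_cons.mp hp
          have hmem : e ∈ q4.support := q4.start_mem_support
          have huc : u ≠ c := fun h => hu (h ▸ by simp)
          have hbc : b ≠ c := fun h => hb (h ▸ by simp)
          have hbd : b ≠ d := fun h => hb (h ▸ by simp)
          have hcd : c ≠ d := fun h => hc (h ▸ by simp)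
          have hce : c ≠ e := fun h => hc (by rw [h]; exact List.mem_cons_of_mem _ hmem)
          exact ⟨b, c, d, hbc, hcd, hbd,
            ⟨u, c, huc, h1.symm, h2⟩, ⟨b, d, hbd, h2.symm, h3⟩, ⟨c, e, hce, h3.symm, h4⟩⟩

lemma center_lemma (hG : G.IsTree) {a b : V} (hab : a = b ∨ G.Adj a b)
    (hst : ∀ x, x ≠ a → x ≠ b →
      ((G.Adj a x ∧ ∀ z, G.Adj x z → z = a) ∨ (G.Adj b x ∧ ∀ z, G.Adj x z → z = b)))
    (l : V → NNReal) (hl : l a ≤ l b) :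
    ∀ x y, x ≠ y → treeDist hG l a x ≤ treeDist hG l y x := by
  have key : ∀ x, x ≠ a → G.Adj a x → (∀ z, G.Adj x z → z = a) →
      ∀ y, x ≠ y → treeDist hG l a x ≤ treeDist hG l y x := by
    intro x hxa hadj hleaf y hxy
    have hpath : (Walk.cons hadj Walk.nil).IsPath := by
      simp [Walk.isPath_def, hadj.ne]
    rw [treeDist_eq hG l hadj.ne hpath]
    simp only [Walk.support_cons, Walk.support_nil, List.map_cons, List.map_nil,
      List.foldr_cons, List.foldr_nil]
    exact max_le (leaf_le_treeDist hG l hleaf (Ne.symm hxy))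
      (max_le (end_le_treeDist hG l (Ne.symm hxy)) zero_le)
  intro x y hxy
  by_cases hxa : x = a
  · subst hxa
    rw [treeDist, if_pos rfl]
    exact zero_le
  · by_cases hxb : x = b
    · have hadj : G.Adj a x := by
        rcases hab with h | h
        · exact absurd (hxb.trans h.symm) hxa
        · rw [hxb]; exact h
      have hlx : l a ≤ l x := by rw [hxb]; exact hl
      have hpath : (Walk.cons hadj Walk.nil).IsPath := by
        simp [Walk.isPath_def, hadj.ne]
      rw [treeDist_eq hG l hadj.ne hpath]
      simp only [Walk.support_cons, Walk.support_nil, List.map_cons, List.map_nil,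
        List.foldr_cons, List.foldr_nil]
      have : max (l a) (max (l x) 0) = l x := by
        rw [max_eq_left (zero_le : (0:NNReal) ≤ l x), max_eq_right hlx]
      rw [this]
      exact end_le_treeDist hG l (Ne.symm hxy)
    · rcases hst x hxa hxb with ⟨hadj, hleaf⟩ | ⟨hadj, hleaf⟩
      · exact key x hxa hadj hleaf y hxy
      · by_cases heq : a = b
        · subst heq
          exact key x hxa hadj hleaf y hxy
        · have hadjab : G.Adj a b := hab.resolve_left heq
          have hax : a ≠ x := Ne.symm hxa
          have hpath : (Walk.cons hadjab (Walk.cons hadj Walk.nil)).IsPath := by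
            simp [Walk.isPath_def, hadjab.ne, hadj.ne, hax]
          rw [treeDist_eq hG l hax hpath]
          simp only [Walk.support_cons, Walk.support_nil, List.map_cons, List.map_nil,
            List.foldr_cons, List.foldr_nil]
          have h1 : l b ≤ treeDist hG l y x := leaf_le_treeDist hG l hleaf (Ne.symm hxy)
          have h2 : l x ≤ treeDist hG l y x := end_le_treeDist hG l (Ne.symm hxy)
          exact max_le (le_trans hl h1) (max_le h1 (max_le h2 zero_le))

lemma no_center (hG : G.IsTree) {u v : V} (p : G.Walk u v) (hp : p.IsPath)
    (hlen : 4 ≤ p.length) :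
    ∃ l : V → NNReal, Nondeg G l ∧
      ∀ t : V, ¬ ∀ x y : V, x ≠ y → treeDist hG l t x ≤ treeDist hG l y x := by
  classical
  cases p with
  | nil => simp at hlen
  | cons h1 q1 =>
  cases q1 with
  | nil => simp at hlen
  | cons h2 q2 =>
  cases q2 with
  | nil => simp only [Walk.length_cons, Walk.length_nil] at hlen; omega
  | cons h3 q3 =>
  cases q3 with
  | nil => simp only [Walk.length_cons, Walk.length_nil] at hlen; omega
  | cons h4 q4 =>
  rename_i b c d e
  clear hlen
  -- distinctness facts
  simp only [Walk.isPath_def, Walk.support_cons] at hp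
  obtain ⟨hu, hp⟩ := List.nodup_cons.mp hp
  obtain ⟨hb, hp⟩ := List.nodup_cons.mp hp
  obtain ⟨hc, hp⟩ := List.nodup_cons.mp hp
  obtain ⟨hd, hp⟩ := List.nodup_cons.mp hp
  have hmem : e ∈ q4.support := q4.start_mem_support
  have hab : u ≠ b := h1.ne
  have hac : u ≠ c := fun h => hu (by rw [h]; simp)
  have had : u ≠ d := fun h => hu (by rw [h]; simp)
  have hae : u ≠ e := fun h => hu (by rw [h]; simp [hmem])
  have hbc : b ≠ c := h2.ne
  have hbd : b ≠ d := fun h => hb (by rw [h]; simp)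
  have hbe : b ≠ e := fun h => hb (by rw [h]; simp [hmem])
  have hcd : c ≠ d := h3.ne
  have hce : c ≠ e := fun h => hc (by rw [h]; simp [hmem])
  have hde : d ≠ e := h4.ne
  -- the labeling
  set l : V → NNReal := fun z => if z = u ∨ z = e then 0 else if z = b ∨ z = d then 1 else 2
    with hldef
  have hla : l u = 0 := by simp [hldef]
  have hle : l e = 0 := by simp [hldef]
  have hlb : l b = 1 := by simp [hldef, hab.symm, hbe]
  have hld : l d = 1 := by simp [hldef, had.symm, hde]
  have hlc : l c = 2 := by simp [hldef, hac.symm, hce, hbc.symm, hcd]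
  have key0 : ∀ z, l z = 0 → z = u ∨ z = e := by
    intro z h0
    simp only [hldef] at h0
    split_ifs at h0 with hh1 hh2
    · exact hh1
    · exact absurd h0 one_ne_zero
    · exact absurd h0 two_ne_zero
  -- the explicit paths
  have hPae : (Walk.cons h1 (Walk.cons h2 (Walk.cons h3 (Walk.cons h4 Walk.nil)))).IsPath := by
    simp [Walk.isPath_def, hab, hac, had, hae, hbc, hbd, hbe, hcd, hce, hde, hab.symm, hac.symm, had.symm, hae.symm, hbc.symm, hbd.symm, hbe.symm, hcd.symm, hce.symm, hde.symm]
  have hPbe : (Walk.cons h2 (Walk.cons h3 (Walk.cons h4 Walk.nil))).IsPath := by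
    simp [Walk.isPath_def, hab, hac, had, hae, hbc, hbd, hbe, hcd, hce, hde, hab.symm, hac.symm, had.symm, hae.symm, hbc.symm, hbd.symm, hbe.symm, hcd.symm, hce.symm, hde.symm]
  have hPde : (Walk.cons h4 Walk.nil).IsPath := by simp [Walk.isPath_def, hde, hde.symm]
  have hPba : (Walk.cons h1.symm Walk.nil).IsPath := by simp [Walk.isPath_def, hab, hab.symm]
  have hPda : (Walk.cons h3.symm (Walk.cons h2.symm (Walk.cons h1.symm Walk.nil))).IsPath := by
    simp [Walk.isPath_def, hab, hac, had, hae, hbc, hbd, hbe, hcd, hce, hde, hab.symm, hac.symm, had.symm, hae.symm, hbc.symm, hbd.symm, hbe.symm, hcd.symm, hce.symm, hde.symm]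
  have hPea : (Walk.cons h4.symm (Walk.cons h3.symm (Walk.cons h2.symm
      (Walk.cons h1.symm Walk.nil)))).IsPath := by
    simp [Walk.isPath_def, hab, hac, had, hae, hbc, hbd, hbe, hcd, hce, hde, hab.symm, hac.symm, had.symm, hae.symm, hbc.symm, hbd.symm, hbe.symm, hcd.symm, hce.symm, hde.symm]
  -- distances
  have dae : treeDist hG l u e = 2 := by
    rw [treeDist_eq hG l hae hPae]
    simp [hla, hlb, hlc, hld, hle]
  have dbe : treeDist hG l b e = 2 := by
    rw [treeDist_eq hG l hbe hPbe]
    simp [hlb, hlc, hld, hle]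
  have dde : treeDist hG l d e = 1 := by
    rw [treeDist_eq hG l hde hPde]
    simp [hld, hle]
  have dba : treeDist hG l b u = 1 := by
    rw [treeDist_eq hG l hab.symm hPba]
    simp [hlb, hla]
  have dda : treeDist hG l d u = 2 := by
    rw [treeDist_eq hG l had.symm hPda]
    simp [hla, hlb, hlc, hld]
  have dea : treeDist hG l e u = 2 := by
    rw [treeDist_eq hG l hae.symm hPea]
    simp [hla, hlb, hlc, hld, hle]
  refine ⟨l, ?_, ?_⟩
  · -- non-degenerate
    intro z w hzw
    rcases eq_or_ne (max (l z) (l w)) 0 with h0 | h0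
    · exfalso
      have hz0 : l z = 0 := le_antisymm ((le_max_left _ _).trans h0.le) zero_le
      have hw0 : l w = 0 := le_antisymm ((le_max_right _ _).trans h0.le) zero_le
      have hadj : G.Adj u e := by
        rcases key0 z hz0 with rfl | rfl <;> rcases key0 w hw0 with rfl | rfl
        · exact absurd rfl hzw.ne
        · exact hzw
        · exact hzw.symm
        · exact absurd rfl hzw.ne
      have hQ : (Walk.cons hadj Walk.nil).IsPath := by simp [Walk.isPath_def, hae]
      have := congrArg Walk.length ((hG.existsUnique_path u e).unique hPae hQ)
      simp at this
    · exact h0.bot_lt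
  · -- no center
    intro t hcen
    by_cases hta : t = u
    · have := hcen e d hde.symm
      rw [hta, dae, dde] at this
      exact absurd this (by norm_num)
    · by_cases htb : t = b
      · have := hcen e d hde.symm
        rw [htb, dbe, dde] at this
        exact absurd this (by norm_num)
      · by_cases htd : t = d
        · have := hcen u b hab
          rw [htd, dda, dba] at this
          exact absurd this (by norm_num)
        · by_cases hte : t = e
          · have := hcen u b hab
            rw [hte, dea, dba] at this
            exact absurd this (by norm_num)
          · have hlt : l t = 2 := by simp [hldef, hta, htb, htd, hte]
            have h2le : (2 : NNReal) ≤ treeDist hG l t u := by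
              rw [← hlt]; exact start_le_treeDist hG l hta
            have := le_trans h2le ((hcen u b hab).trans dba.le)
            exact absurd this (by norm_num)

end Aux

theorem stmt_11 {V : Type*} {G : SimpleGraph V} (hG : G.IsTree) :
    ((∀ l : V → NNReal, Nondeg G l →
        ∃ x₀ : V, ∀ x y : V, x ≠ y → treeDist hG l x₀ x ≤ treeDist hG l y x) ↔
      (∀ (u v : V) (p : G.Walk u v), p.IsPath → p.length ≤ 3)) ∧
    ((∀ (u v : V) (p : G.Walk u v), p.IsPath → p.length ≤ 3) ↔
      ¬ ∃ u v w : V, u ≠ v ∧ v ≠ w ∧ u ≠ w ∧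
          DegGe2 G u ∧ DegGe2 G v ∧ DegGe2 G w) := by
  constructor
  · constructor
    · intro h1
      by_contra hcon
      push_neg at hcon
      obtain ⟨u, v, p, hp, hlen⟩ := hcon
      obtain ⟨l, hnd, hnc⟩ := no_center hG p hp (by omega)
      obtain ⟨t, ht⟩ := h1 l hnd
      exact hnc t ht
    · intro h2 l _
      obtain ⟨a, b, hab, hst⟩ := structure_lemma hG (no_three hG h2)
      rcases le_total (l a) (l b) with hl | hl
      · exact ⟨a, center_lemma hG hab hst l hl⟩
      · refine ⟨b, center_lemma hG ?_ ?_ l hl⟩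
        · rcases hab with h | h
          · exact Or.inl h.symm
          · exact Or.inr h.symm
        · intro x hxb hxa
          rcases hst x hxa hxb with h | h
          · exact Or.inr h
          · exact Or.inl h
  · exact ⟨no_three hG, le_three hG⟩
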